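/- Assume condition (2.2) holds. Then for all t ≥ 0, ‖∫_0^t e^{(t−τ)A} B e^{τC} dτ‖_∞ ≤ (1 + 3e^{−rt})·2S/h. -/

import Mathlib

/-- Tridiagonal matrix with diagonal `α`, subdiagonal `β` and superdiagonal `γ`. -/
def tridiag {m : ℕ} (α β γ : Fin m → ℝ) : Matrix (Fin m) (Fin m) ℝ :=
  Matrix.of fun i j =>
    if (i : ℕ) = j then α i
    else if (i : ℕ) = (j : ℕ) + 1 then β i
    else if (j : ℕ) = (i : ℕ) + 1 then γ i
    else 0

/-- The `(m+1)×2` matrix whose only nonzero entry is `g` in the bottom-left position. -/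
def Bmat {m : ℕ} (g : ℝ) : Matrix (Fin (m + 1)) (Fin 2) ℝ :=
  Matrix.of fun i j => if i = Fin.last m ∧ j = 0 then g else 0

/-- The `2×2` matrix both of whose rows equal `(−rS/h, r·s_{m+1}/h)`. -/
noncomputable def Cmat (r spen S h : ℝ) : Matrix (Fin 2) (Fin 2) ℝ :=
  Matrix.of fun _ j => if j = 0 then -(r * S) / h else r * spen / h

/-- The maximum norm of a real matrix: `‖X‖_∞ = max_i Σ_j |X i j|`. -/
noncomputable def matMaxNorm {ι κ : Type*} [Fintype ι] [Fintype κ]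
    (X : Matrix ι κ ℝ) : ℝ :=
  ⨆ i, ∑ j, |X i j|

/-- The logarithmic maximum norm `μ_∞[X] = max_i ( x_{ii} + Σ_{j≠i} |x_{ij}| )`. -/
noncomputable def logMaxNorm {ι : Type*} [Fintype ι] [DecidableEq ι]
    (X : Matrix ι ι ℝ) : ℝ :=
  ⨆ i, (X i i + ∑ j ∈ Finset.univ.erase i, |X i j|)


/-!
Write `h = S - s_{m+1}` and `b = γ_m e_m`, so that `B = b e_1ᵀ`. Since `C = -r Q` with `Q`
idempotent, `e^{τC} = 1 + (e^{-rτ} - 1) Q`, and every entry of the integral is a fixed combination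
of `v_i = ∫_0^t (e^{(t-τ)A} b)_i dτ` and `u_i = ∫_0^t (e^{(t-τ)A} b)_i e^{-rτ} dτ`.

By Duhamel's formula, `∫_0^t (e^{(t-τ)A} b)_i e^{-wτ} dτ` is the entry `(i, m+1)` of `e^{tM}` for
the bordered matrix `M = [[A, b], [0, -w]]`. Condition (2.2) gives `μ_∞[M] ≤ -w` for
`w ∈ {0, r}`, and `‖e^{tM}‖_∞ ≤ e^{t μ_∞[M]}`; hence `|v_i| ≤ 1` and `|u_i| ≤ e^{-rt}`, and the row
sums of the integral are at most `(2 s_{m+1} + (S + s_{m+1}) e^{-rt}) / h`.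
-/

open NormedSpace Matrix

theorem norm_exp_le_exp_norm {𝔸 : Type*} [NormedRing 𝔸] [NormedAlgebra ℝ 𝔸] [CompleteSpace 𝔸]
    [NormOneClass 𝔸] (x : 𝔸) : ‖exp x‖ ≤ Real.exp ‖x‖ := by
  rw [exp_eq_tsum ℝ, Real.exp_eq_exp_ℝ, exp_eq_tsum ℝ]
  refine (norm_tsum_le_tsum_norm (norm_expSeries_summable' x)).trans ?_
  refine (norm_expSeries_summable' x).tsum_le_tsum (fun k => ?_) (expSeries_summable' ‖x‖)
  rw [norm_smul, smul_eq_mul, Real.norm_of_nonneg (by positivity)]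
  exact mul_le_mul_of_nonneg_left (norm_pow_le x k) (by positivity)

theorem exp_smul_eq_exp_smul_add_integral {𝔸 : Type*} [NormedRing 𝔸] [NormedAlgebra ℝ 𝔸]
    [CompleteSpace 𝔸] (P Q : 𝔸) (t : ℝ) :
    exp (t • Q) = exp (t • P) + ∫ τ in (0:ℝ)..t, exp ((t - τ) • P) * (Q - P) * exp (τ • Q) := by
  have hderiv (τ : ℝ) : HasDerivAt (fun σ : ℝ => exp ((t - σ) • P) * exp (σ • Q))
      (exp ((t - τ) • P) * (Q - P) * exp (τ • Q)) τ := by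
    have hP := (hasDerivAt_exp_smul_const (𝕂 := ℝ) P (t - τ)).scomp τ
      ((hasDerivAt_id τ).const_sub t)
    have hQ := hasDerivAt_exp_smul_const' (𝕂 := ℝ) Q τ
    refine (hP.mul hQ).congr_deriv ?_
    simp only [Function.comp_apply, neg_smul, one_smul]
    noncomm_ring
  have hcont : Continuous fun τ : ℝ => exp ((t - τ) • P) * (Q - P) * exp (τ • Q) := by
    -- `exp_continuous` is stated for `ℚ`-normed algebras
    let _ := NormedAlgebra.restrictScalars ℚ ℝ 𝔸
    fun_prop
  rw [intervalIntegral.integral_eq_sub_of_hasDerivAt (fun τ _ => hderiv τ)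
    (hcont.intervalIntegrable 0 t)]
  simp

section LogMaxNorm

variable {ι : Type*} [Fintype ι] [DecidableEq ι]

theorem le_logMaxNorm (M : Matrix ι ι ℝ) (i : ι) :
    M i i + ∑ j ∈ Finset.univ.erase i, |M i j| ≤ logMaxNorm M :=
  le_ciSup (f := fun i => M i i + ∑ j ∈ Finset.univ.erase i, |M i j|)
    (Set.finite_range _).bddAbove i

theorem logMaxNorm_le [Nonempty ι] {M : Matrix ι ι ℝ} {c : ℝ}
    (h : ∀ i, M i i + ∑ j ∈ Finset.univ.erase i, |M i j| ≤ c) : logMaxNorm M ≤ c :=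
  ciSup_le h

theorem add_le_of_logMaxNorm_smul_one_add_le {M : Matrix ι ι ℝ} {r c : ℝ}
    (h : logMaxNorm (r • 1 + M) ≤ c) (i : ι) :
    r + M i i + ∑ j ∈ Finset.univ.erase i, |M i j| ≤ c := by
  have hoff : ∀ j ∈ Finset.univ.erase i, |(r • 1 + M) i j| = |M i j| := fun j hj => by
    simp [one_apply_ne' (Finset.ne_of_mem_erase hj)]
  have := le_logMaxNorm (r • 1 + M) i
  rw [Finset.sum_congr rfl hoff] at this
  simp only [Matrix.add_apply, Matrix.smul_apply, one_apply_eq, smul_eq_mul, mul_one] at this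
  linarith

end LogMaxNorm

section LinftyOpNorm

attribute [local instance] Matrix.linftyOpNormedAddCommGroup Matrix.linftyOpNormedSpace
  Matrix.linftyOpNormedRing Matrix.linftyOpNormedAlgebra Matrix.linfty_opNormOneClass

variable {m n o : Type*} [Fintype m] [Fintype n] [Fintype o]

theorem Matrix.sum_abs_le_linfty_opNorm (X : Matrix m n ℝ) (i : m) : ∑ j, |X i j| ≤ ‖X‖ := by
  have := Finset.le_sup (f := fun i => ∑ j, ‖X i j‖₊) (Finset.mem_univ i)
  rw [linfty_opNorm_def, ← NNReal.coe_le_coe] at *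
  simpa [Real.norm_eq_abs] using this

theorem Matrix.linfty_opNorm_le_of_sum_abs_le (X : Matrix m n ℝ) {K : ℝ} (hK : 0 ≤ K)
    (h : ∀ i, ∑ j, |X i j| ≤ K) : ‖X‖ ≤ K := by
  lift K to NNReal using hK
  rw [linfty_opNorm_def, NNReal.coe_le_coe]
  refine Finset.sup_le fun i _ => ?_
  rw [← NNReal.coe_le_coe]
  simpa [Real.norm_eq_abs] using h i

theorem Matrix.intervalIntegral_apply {F : ℝ → Matrix m n ℝ} (hF : Continuous F) (a b : ℝ)
    (i : m) (j : n) : (∫ τ in a..b, F τ) i j = ∫ τ in a..b, F τ i j :=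
  ((entryLinearMap ℝ ℝ i j).toContinuousLinearMap.intervalIntegral_comp_comm
    (hF.intervalIntegrable a b)).symm

variable [DecidableEq m] [DecidableEq n] [DecidableEq o]

theorem Matrix.continuous_exp_smul (A : Matrix n n ℝ) : Continuous fun τ : ℝ => exp (τ • A) := by
  fun_prop

theorem Matrix.exp_smul_one (x : ℝ) : exp (x • (1 : Matrix n n ℝ)) = Real.exp x • 1 := by
  rw [← Algebra.algebraMap_eq_smul_one, ← Algebra.algebraMap_eq_smul_one, Real.exp_eq_exp_ℝ,
    algebraMap_exp_comm]
  rfl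

theorem Matrix.norm_exp_smul_le_of_logMaxNorm_le [Nonempty n] {M : Matrix n n ℝ} {ρ t : ℝ}
    (hM : logMaxNorm M ≤ -ρ) (ht : 0 ≤ t) : ‖exp (t • M)‖ ≤ Real.exp (-(ρ * t)) := by
  -- shifting by `c` makes the diagonal nonnegative, which turns `μ_∞` into the operator norm
  set c := ∑ i, |M i i|
  set P := M + c • (1 : Matrix n n ℝ)
  have hrow (i : n) : ∑ j, |P i j| ≤ c - ρ := by
    have hdiag : -M i i ≤ c := (neg_le_abs _).trans
      (Finset.single_le_sum (f := fun i => |M i i|) (fun _ _ => abs_nonneg _) (Finset.mem_univ i))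
    have hoff : ∀ j ∈ Finset.univ.erase i, |P i j| = |M i j| := fun j hj => by
      simp [P, one_apply_ne' (Finset.ne_of_mem_erase hj)]
    rw [← Finset.add_sum_erase _ _ (Finset.mem_univ i), Finset.sum_congr rfl hoff]
    simp only [P, add_apply, smul_apply, one_apply_eq, smul_eq_mul, mul_one]
    rw [abs_of_nonneg (by linarith)]
    linarith [le_logMaxNorm M i]
  have hP : ‖P‖ ≤ c - ρ := by
    obtain ⟨i⟩ := ‹Nonempty n›
    refine linfty_opNorm_le_of_sum_abs_le P ?_ hrow
    exact (Finset.sum_nonneg fun j _ => abs_nonneg (P i j)).trans (hrow i)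
  have hsplit : exp (t • M) = Real.exp (-(t * c)) • exp (t • P) := by
    have hM : t • M = (-(t * c)) • (1 : Matrix n n ℝ) + t • P := by
      simp only [P, smul_add, smul_smul, neg_smul]; abel
    rw [hM, exp_add_of_commute _ _ ((Commute.one_left _).smul_left _), exp_smul_one, smul_one_mul]
  calc ‖exp (t • M)‖ = Real.exp (-(t * c)) * ‖exp (t • P)‖ := by
        rw [hsplit, norm_smul, Real.norm_of_nonneg (Real.exp_pos _).le]
    _ ≤ Real.exp (-(t * c)) * Real.exp (t * (c - ρ)) := by
        gcongr
        refine (norm_exp_le_exp_norm _).trans (Real.exp_le_exp.mpr ?_)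
        rw [norm_smul, Real.norm_of_nonneg ht]
        gcongr
    _ = Real.exp (-(ρ * t)) := by rw [← Real.exp_add]; ring_nf

theorem Matrix.mul_exp_eq_exp_mul_of_mul_eq {E : Matrix m n ℝ} {X : Matrix n n ℝ}
    {Y : Matrix m m ℝ} (h : E * X = (Y * E : Matrix m n ℝ)) :
    E * exp X = (exp Y * E : Matrix m n ℝ) := by
  have hpow (k : ℕ) : E * X ^ k = Y ^ k * E := by
    induction k with
    | zero => simp
    | succ k ih =>
      rw [pow_succ, ← Matrix.mul_assoc, ih, Matrix.mul_assoc, h, ← Matrix.mul_assoc, ← pow_succ]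
  have hX := (exp_series_hasSum_exp' (𝕂 := ℝ) X).mapL
    (mulLeftLinearMap n ℝ E).toContinuousLinearMap
  have hY := (exp_series_hasSum_exp' (𝕂 := ℝ) Y).mapL
    (mulRightLinearMap m ℝ E).toContinuousLinearMap
  simp only [LinearMap.coe_toContinuousLinearMap', mulLeftLinearMap_apply,
    mulRightLinearMap_apply, Matrix.mul_smul, Matrix.smul_mul, hpow] at hX hY
  exact hX.unique hY

theorem Matrix.exp_smul_of_mul_self_eq {Q : Matrix n n ℝ} (hQ : Q * Q = Q) (x : ℝ) :
    exp (x • Q) = 1 + (Real.exp x - 1) • Q := by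
  have hQ' : Q * exp (x • Q) = Real.exp x • Q := by
    rw [mul_exp_eq_exp_mul_of_mul_eq (Y := x • 1), exp_smul_one, smul_one_mul]
    rw [Matrix.mul_smul, hQ, smul_one_mul]
  have hQc : (1 - Q) * exp (x • Q) = 1 - Q := by
    rw [mul_exp_eq_exp_mul_of_mul_eq (Y := 0), exp_zero, Matrix.one_mul]
    rw [Matrix.mul_smul, Matrix.sub_mul, hQ, Matrix.one_mul, sub_self, smul_zero, Matrix.zero_mul]
  calc exp (x • Q) = (1 - Q) * exp (x • Q) + Q * exp (x • Q) := by
        rw [← Matrix.add_mul, sub_add_cancel, Matrix.one_mul]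
    _ = 1 + (Real.exp x - 1) • Q := by rw [hQ', hQc, sub_smul, one_smul]; abel

theorem Matrix.exp_fromBlocks_zero₂₁ (A : Matrix n n ℝ) (B : Matrix n o ℝ) (D : Matrix o o ℝ) :
    exp (fromBlocks A B 0 D) =
      fromBlocks (exp A) (exp (fromBlocks A B 0 D)).toBlocks₁₂ 0 (exp D) := by
  set X : Matrix (n ⊕ o) (n ⊕ o) ℝ := exp (fromBlocks A B 0 D)
  have hcol : (fromRows 1 0 : Matrix (n ⊕ o) n ℝ) * exp A =
      X * (fromRows 1 0 : Matrix (n ⊕ o) n ℝ) :=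
    mul_exp_eq_exp_mul_of_mul_eq (by simp [fromBlocks_mul_fromRows, fromRows_mul])
  have hrow : (fromCols 0 1 : Matrix o (n ⊕ o) ℝ) * X =
      exp D * (fromCols 0 1 : Matrix o (n ⊕ o) ℝ) :=
    mul_exp_eq_exp_mul_of_mul_eq (by simp [fromCols_mul_fromBlocks, mul_fromCols])
  ext (i | i) (j | j)
  · simpa [mul_apply, one_apply, Fintype.sum_sum_type] using
      (congrFun (congrFun hcol (.inl i)) j).symm
  · rfl
  · simpa [mul_apply, one_apply, Fintype.sum_sum_type] using
      (congrFun (congrFun hcol (.inr i)) j).symm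
  · simpa [mul_apply, one_apply, Fintype.sum_sum_type] using congrFun (congrFun hrow i) (.inr j)

theorem Matrix.exp_fromBlocks_zero_zero (A : Matrix n n ℝ) (D : Matrix o o ℝ) :
    exp (fromBlocks A 0 0 D) = fromBlocks (exp A) 0 0 (exp D) := by
  have hrow : (fromCols 1 0 : Matrix n (n ⊕ o) ℝ) *
      (exp (fromBlocks A 0 0 D) : Matrix (n ⊕ o) (n ⊕ o) ℝ) =
      exp A * (fromCols 1 0 : Matrix n (n ⊕ o) ℝ) :=
    mul_exp_eq_exp_mul_of_mul_eq (by simp [fromCols_mul_fromBlocks, mul_fromCols])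
  rw [exp_fromBlocks_zero₂₁]
  congr
  ext i j
  simpa [mul_apply, one_apply, Fintype.sum_sum_type, toBlocks₁₂] using
    congrFun (congrFun hrow i) (.inr j)

theorem Matrix.toBlocks₁₂_exp_smul_fromBlocks (A : Matrix n n ℝ) (B : Matrix n o ℝ)
    (D : Matrix o o ℝ) (t : ℝ) :
    (exp (t • fromBlocks A B 0 D)).toBlocks₁₂ =
      ∫ τ in (0:ℝ)..t, exp ((t - τ) • A) * B * exp (τ • D) := by
  set P := fromBlocks A 0 0 D
  set Q := fromBlocks A B 0 D
  have hsmul (s : ℝ) (X : Matrix n o ℝ) :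
      s • fromBlocks A X 0 D = fromBlocks (s • A) (s • X) 0 (s • D) := by
    simp [fromBlocks_smul]
  have hP (s : ℝ) : exp (s • P) = fromBlocks (exp (s • A)) 0 0 (exp (s • D)) := by
    rw [← exp_fromBlocks_zero_zero, ← smul_zero s, ← hsmul]
  have hQ (s : ℝ) :
      exp (s • Q) = fromBlocks (exp (s • A)) (exp (s • Q)).toBlocks₁₂ 0 (exp (s • D)) := by
    conv_lhs => rw [hsmul, exp_fromBlocks_zero₂₁, ← hsmul]
  have hQP : Q - P = fromBlocks 0 B 0 0 := by
    rw [sub_eq_iff_eq_add, fromBlocks_add]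
    simp [Q]
  have hduhamel : exp (t • Q) = exp (t • P) +
      ∫ τ in (0:ℝ)..t, exp ((t - τ) • P) * (Q - P) * exp (τ • Q) :=
    exp_smul_eq_exp_smul_add_integral P Q t
  ext i k
  rw [toBlocks₁₂, of_apply, hduhamel, add_apply, intervalIntegral_apply (by fun_prop),
    intervalIntegral_apply (by fun_prop), hP, fromBlocks_apply₁₂, zero_apply, zero_add]
  refine intervalIntegral.integral_congr fun τ _ => ?_
  rw [hP, hQP, hQ, fromBlocks_multiply, fromBlocks_multiply]
  simp

theorem abs_integral_mulVec_mul_exp_le (A : Matrix n n ℝ) (b : n → ℝ) {w t : ℝ}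
    (hrows : ∀ i, A i i + ∑ j ∈ Finset.univ.erase i, |A i j| + |b i| ≤ -w) (ht : 0 ≤ t)
    (i : n) :
    |∫ τ in (0:ℝ)..t, (exp ((t - τ) • A) *ᵥ b) i * Real.exp (-(w * τ))| ≤
      Real.exp (-(w * t)) := by
  set M := fromBlocks A (replicateCol Unit b) 0 ((-w) • (1 : Matrix Unit Unit ℝ))
  have hM : logMaxNorm M ≤ -w := by
    refine logMaxNorm_le fun x => ?_
    rw [Finset.sum_erase_eq_sub (Finset.mem_univ x), Fintype.sum_sum_type]
    rcases x with i | u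
    · have := hrows i
      rw [Finset.sum_erase_eq_sub (Finset.mem_univ i)] at this
      simp only [M, fromBlocks_apply₁₁, fromBlocks_apply₁₂, replicateCol_apply,
        Finset.univ_unique, Finset.sum_singleton] at this ⊢
      linarith
    · simp [M]
  have hentry : ∫ τ in (0:ℝ)..t, (exp ((t - τ) • A) *ᵥ b) i * Real.exp (-(w * τ)) =
      exp (t • M) (.inl i) (.inr ()) := by
    rw [show exp (t • M) (.inl i) (.inr ()) = (exp (t • M)).toBlocks₁₂ i () from rfl,
      toBlocks₁₂_exp_smul_fromBlocks, intervalIntegral_apply (by fun_prop)]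
    refine intervalIntegral.integral_congr fun τ _ => ?_
    rw [smul_smul, exp_smul_one]
    simp [mul_apply, mulVec, dotProduct, mul_comm]
  rw [hentry]
  calc |exp (t • M) (.inl i) (.inr ())| ≤ ∑ y, |exp (t • M) (.inl i) y| :=
        Finset.single_le_sum (f := fun y => |exp (t • M) (.inl i) y|) (fun _ _ => abs_nonneg _)
          (Finset.mem_univ _)
    _ ≤ ‖exp (t • M)‖ := sum_abs_le_linfty_opNorm _ _
    _ ≤ Real.exp (-(w * t)) := norm_exp_smul_le_of_logMaxNorm_le hM ht

end LinftyOpNorm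

theorem sum_abs_tridiag_last_row_le {m : ℕ} (α β γ : Fin (m + 1) → ℝ) :
    ∑ j ∈ Finset.univ.erase (Fin.last m), |tridiag α β γ (Fin.last m) j| ≤ |β (Fin.last m)| := by
  cases m with
  | zero => simp [Finset.univ_unique]
  | succ k =>
    rw [Finset.sum_eq_single_of_mem (Fin.castSucc (Fin.last k)) (by simp [Fin.castSucc_ne_last])]
    · simp [tridiag]
    · intro j hj hjk
      have hj' : (j : ℕ) ≠ k + 1 := fun h => Finset.ne_of_mem_erase hj (Fin.ext h)
      have hjk' : (j : ℕ) ≠ k := fun h => hjk (Fin.ext h)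
      simp only [tridiag, of_apply, Fin.val_last]
      rw [if_neg (by omega), if_neg (by omega), if_neg (by omega), abs_zero]

theorem tridiag_row_add_abs_single_le {m : ℕ} {α β γ : Fin (m + 1) → ℝ} {r : ℝ}
    (hmu : logMaxNorm (r • 1 + tridiag α β γ) ≤ 0)
    (hrow : r + α (Fin.last m) + |β (Fin.last m)| + |γ (Fin.last m)| ≤ 0) (i : Fin (m + 1)) :
    tridiag α β γ i i + ∑ j ∈ Finset.univ.erase i, |tridiag α β γ i j| +
      |(Pi.single (Fin.last m) (γ (Fin.last m)) : Fin (m + 1) → ℝ) i| ≤ -r := by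
  have hi := add_le_of_logMaxNorm_smul_one_add_le hmu i
  by_cases hil : i = Fin.last m
  · subst hil
    have := sum_abs_tridiag_last_row_le α β γ
    simp only [Pi.single_eq_same, tridiag, of_apply, if_pos] at this ⊢
    linarith
  · simp only [Pi.single_eq_of_ne hil, abs_zero]
    linarith

theorem exp_smul_Cmat_apply_zero {r s S : ℝ} (hsS : s < S) (τ : ℝ) (j : Fin 2) :
    exp (τ • Cmat r s S (S - s)) 0 j =
      ![-(s / (S - s)), s / (S - s)] j +
        ![S / (S - s), -(s / (S - s))] j * Real.exp (-(r * τ)) := by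
  have hh : S - s ≠ 0 := sub_ne_zero.mpr hsS.ne'
  -- `Cmat = -r • Q`, where every row of `Q` is the same vector with entry sum `1`, so `Q * Q = Q`
  set Q : Matrix (Fin 2) (Fin 2) ℝ := of fun _ => ![S / (S - s), -(s / (S - s))]
  have hQ : Q * Q = Q := by
    ext i j
    fin_cases j <;> simp [Q, mul_apply, Fin.sum_univ_two] <;> field_simp <;> ring
  have hC : τ • Cmat r s S (S - s) = (-(r * τ)) • Q := by
    ext i j
    fin_cases j <;> simp [Q, Cmat] <;> ring
  rw [hC, exp_smul_of_mul_self_eq hQ]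
  fin_cases j <;> simp [Q] <;> field_simp <;> ring

theorem integral_mul_Bmat_mul_exp_Cmat_apply {m : ℕ} (A : Matrix (Fin (m + 1)) (Fin (m + 1)) ℝ)
    (g : ℝ) {r s S : ℝ} (hsS : s < S) (t : ℝ) (i : Fin (m + 1)) (j : Fin 2) :
    ∫ τ in (0:ℝ)..t, (exp ((t - τ) • A) * Bmat (m := m) g * exp (τ • Cmat r s S (S - s))) i j =
      ![-(s / (S - s)), s / (S - s)] j *
          (∫ τ in (0:ℝ)..t, (exp ((t - τ) • A) *ᵥ Pi.single (Fin.last m) g) i) +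
        ![S / (S - s), -(s / (S - s))] j *
          ∫ τ in (0:ℝ)..t,
            (exp ((t - τ) • A) *ᵥ Pi.single (Fin.last m) g) i * Real.exp (-(r * τ)) := by
  set v : ℝ → ℝ := fun τ => (exp ((t - τ) • A) *ᵥ Pi.single (Fin.last m) g) i
  have hv : Continuous v := (continuous_apply i).comp
    (((continuous_exp_smul A).comp (continuous_sub_left t)).matrix_mulVec continuous_const)
  have hpt (τ : ℝ) : (exp ((t - τ) • A) * Bmat (m := m) g * exp (τ • Cmat r s S (S - s))) i j =
      ![-(s / (S - s)), s / (S - s)] j * v τ +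
        ![S / (S - s), -(s / (S - s))] j * (v τ * Real.exp (-(r * τ))) := by
    simp [v, Bmat, mul_apply, Fin.sum_univ_two, mulVec, dotProduct, Pi.single_apply]
    rw [exp_smul_Cmat_apply_zero hsS]
    ring
  simp_rw [hpt]
  rw [intervalIntegral.integral_add, intervalIntegral.integral_const_mul,
    intervalIntegral.integral_const_mul]
  · exact (hv.const_mul _).intervalIntegrable 0 t
  · exact ((hv.mul (by fun_prop)).const_mul _).intervalIntegrable 0 t

theorem sum_abs_combination_le {s S V U E : ℝ} (hs : 0 < s) (hsS : s < S) (hV : |V| ≤ 1)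
    (hU : |U| ≤ E) :
    ∑ j : Fin 2, |![-(s / (S - s)), s / (S - s)] j * V + ![S / (S - s), -(s / (S - s))] j * U| ≤
      (1 + 3 * E) * (2 * S / (S - s)) := by
  have hh : 0 < S - s := sub_pos.mpr hsS
  have hterm (x y : ℝ) : |x * V + y * U| ≤ |x| + |y| * E := by
    refine (abs_add_le _ _).trans ?_
    rw [abs_mul, abs_mul]
    gcongr
    exact mul_le_of_le_one_right (abs_nonneg x) hV
  calc ∑ j : Fin 2, |![-(s / (S - s)), s / (S - s)] j * V + ![S / (S - s), -(s / (S - s))] j * U|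
      ≤ (|-(s / (S - s))| + |S / (S - s)| * E) + (|s / (S - s)| + |-(s / (S - s))| * E) := by
        rw [Fin.sum_univ_two]
        exact add_le_add (hterm _ _) (hterm _ _)
    _ = (2 * s + (S + s) * E) / (S - s) := by
        simp only [abs_neg, abs_div, abs_of_pos hh, abs_of_pos hs, abs_of_pos (hs.trans hsS)]
        ring
    _ ≤ (1 + 3 * E) * (2 * S / (S - s)) := by
        rw [mul_div_assoc', div_le_div_iff_of_pos_right hh]
        nlinarith [(abs_nonneg U).trans hU]

theorem statement7_general (m : ℕ) (r spen S : ℝ) (hr : 0 < r) (hspen : 0 < spen) (hsS : spen < S)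
    (α β γ : Fin (m + 1) → ℝ)
    (A : Matrix (Fin (m + 1)) (Fin (m + 1)) ℝ) (hA : A = tridiag α β γ)
    (B : Matrix (Fin (m + 1)) (Fin 2) ℝ) (hB : B = Bmat (γ (Fin.last m)))
    (C : Matrix (Fin 2) (Fin 2) ℝ) (hC : C = Cmat r spen S (S - spen))
    (hmu : logMaxNorm (r • (1 : Matrix (Fin (m + 1)) (Fin (m + 1)) ℝ) + A) ≤ 0)
    (hrow : r + α (Fin.last m) + |β (Fin.last m)| + |γ (Fin.last m)| ≤ 0) :
    ∀ t : ℝ, 0 ≤ t →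
      matMaxNorm (Matrix.of fun (i : Fin (m + 1)) (j : Fin 2) =>
          ∫ τ in (0:ℝ)..t,
            (NormedSpace.exp ((t - τ) • A) * B * NormedSpace.exp (τ • C)) i j) ≤
        (1 + 3 * Real.exp (-(r * t))) * (2 * S / (S - spen)) := by
  intro t ht
  subst hA hB hC
  have hrows := tridiag_row_add_abs_single_le hmu hrow
  have hu := abs_integral_mulVec_mul_exp_le _ _ hrows ht
  have hv (i : Fin (m + 1)) := abs_integral_mulVec_mul_exp_le (w := 0) _ _
    (fun i => (hrows i).trans (by linarith)) ht i
  simp only [zero_mul, neg_zero, Real.exp_zero, mul_one] at hv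
  refine ciSup_le fun i => ?_
  simp only [of_apply, integral_mul_Bmat_mul_exp_Cmat_apply _ _ hsS]
  exact sum_abs_combination_le hspen hsS (hv i) (hu i)

/-- Assume condition (2.2) holds (`rI + A` invertible, `μ_∞[rI + A] ≤ 0`, and
`r + α_m + |β_m| + |γ_m| ≤ 0`, with the convention `β_1 = 0` if `m = 1`).  Then for
all `t ≥ 0`, `‖∫_0^t e^{(t−τ)A} B e^{τC} dτ‖_∞ ≤ (1 + 3e^{−rt})·2S/h`. -/
theorem statement7 (m : ℕ) (r spen S : ℝ) (hr : 0 < r) (hspen : 0 < spen) (hsS : spen < S)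
    (α β γ : Fin (m + 1) → ℝ) (hconv : m = 0 → β 0 = 0)
    (A : Matrix (Fin (m + 1)) (Fin (m + 1)) ℝ) (hA : A = tridiag α β γ)
    (B : Matrix (Fin (m + 1)) (Fin 2) ℝ) (hB : B = Bmat (γ (Fin.last m)))
    (C : Matrix (Fin 2) (Fin 2) ℝ) (hC : C = Cmat r spen S (S - spen))
    (hinv : IsUnit (r • (1 : Matrix (Fin (m + 1)) (Fin (m + 1)) ℝ) + A).det)
    (hmu : logMaxNorm (r • (1 : Matrix (Fin (m + 1)) (Fin (m + 1)) ℝ) + A) ≤ 0)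
    (hrow : r + α (Fin.last m) + |β (Fin.last m)| + |γ (Fin.last m)| ≤ 0) :
    ∀ t : ℝ, 0 ≤ t →
      matMaxNorm (Matrix.of fun (i : Fin (m + 1)) (j : Fin 2) =>
          ∫ τ in (0:ℝ)..t,
            (NormedSpace.exp ((t - τ) • A) * B * NormedSpace.exp (τ • C)) i j) ≤
        (1 + 3 * Real.exp (-(r * t))) * (2 * S / (S - spen)) :=
  statement7_general m r spen S hr hspen hsS α β γ A hA B hB C hC hmu hrow
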